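/- Let n ≥ 1. Then 12·∑_{j=1}^{n-1} (1+q^j)/[j]_q ≡ (n²-1)(1-q)²[n]_q modulo Φ_n(q)², in the sense that (12·∑_{j=1}^{n-1} (1+q^j)/[j]_q − (n²-1)(1-q)(1-q^n))·∏_{j=1}^{n-1}[j]_q is divisible by Φ_n(q)² in ℤ[q]. -/

import Mathlib

open Polynomial Finset

/-!
Modulo `Φ_n²` every `1 - q^k` with `0 < k < n` is invertible, say with inverse `W_k`, and since
`(1 - q) [k]_q = 1 - q^k` the claim becomes `12 ∑ (1 + q^j) W_j ≡ (n² - 1)(1 - q^n)`. The exact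
identity `(1 + q^j) W_j = (1 - q^n) W_j W_{n-j} + (q^j W_j - q^{n-j} W_{n-j})`, whose last part
cancels under `j ↦ n - j`, turns the left side into `12 (1 - q^n) ∑ W_j W_{n-j}`. As `Φ_n` divides
`1 - q^n`, it remains to know `12 ∑ W_j W_{n-j} ≡ n² - 1` modulo `Φ_n`, i.e. at a primitive `n`-th
root of unity `ζ`: `12 ∑_{j=1}^{n-1} 1 / ((1 - ζ^j)(1 - ζ^{-j})) = n² - 1`. This is Parseval's
identity for the discrete Fourier transform of `i ↦ i`, whose value at `ζ^j ≠ 1` is `-n / (1 - ζ^j)`.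
-/

/-- The q-integer [j]_q = 1 + q + ⋯ + q^{j-1} as a polynomial over ℤ. -/
noncomputable def qInt (j : ℕ) : Polynomial ℤ := ∑ i ∈ Finset.range j, Polynomial.X ^ i

section Sums

variable {R : Type*} [CommRing R]

theorem two_mul_sum_range_natCast (n : ℕ) : 2 * ∑ i ∈ range n, (i : R) = n * (n - 1) := by
  induction n with
  | zero => simp
  | succ n ih => rw [sum_range_succ, mul_add, ih]; push_cast; ring

theorem six_mul_sum_range_natCast_sq (n : ℕ) :
    6 * ∑ i ∈ range n, (i : R) ^ 2 = n * (n - 1) * (2 * n - 1) := by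
  induction n with
  | zero => simp
  | succ n ih => rw [sum_range_succ, mul_add, ih]; push_cast; ring

theorem one_sub_mul_sum_range_natCast_mul_pow (z : R) (n : ℕ) :
    (1 - z) * ∑ i ∈ range n, (i : R) * z ^ i = z * ∑ i ∈ range n, z ^ i - n * z ^ n := by
  induction n with
  | zero => simp
  | succ n ih => rw [sum_range_succ, sum_range_succ, mul_add, ih]; push_cast; ring

theorem sum_Ico_one_add_pow_mul (x : R) (n : ℕ) (W : ℕ → R)
    (hW : ∀ k ∈ Ico 1 n, (1 - x ^ k) * W k = 1) :
    ∑ j ∈ Ico 1 n, (1 + x ^ j) * W j = (1 - x ^ n) * ∑ j ∈ Ico 1 n, W j * W (n - j) := by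
  have hterm : ∀ j ∈ Ico 1 n, (1 + x ^ j) * W j
      = (1 - x ^ n) * (W j * W (n - j)) + (x ^ j * W j - x ^ (n - j) * W (n - j)) := by
    intro j hj
    have hj' : n - j ∈ Ico 1 n := by simp only [mem_Ico] at hj ⊢; omega
    have hx : x ^ j * x ^ (n - j) = x ^ n := by
      rw [← pow_add, Nat.add_sub_cancel' (mem_Ico.mp hj).2.le]
    linear_combination -x ^ (n - j) * W (n - j) * hW j hj - W j * hW _ hj' - W j * W (n - j) * hx
  have hreflect : ∑ j ∈ Ico 1 n, x ^ (n - j) * W (n - j) = ∑ j ∈ Ico 1 n, x ^ j * W j := by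
    simpa using sum_Ico_reflect (fun j ↦ x ^ j * W j) 1 n.le_succ
  rw [sum_congr rfl hterm, sum_add_distrib, sum_sub_distrib, hreflect, sub_self, add_zero, mul_sum]

theorem sum_Ico_one_add_pow_mul_prod_erase (x : R) (n : ℕ) (Q W : ℕ → R)
    (hQ : ∀ k, (1 - x) * Q k = 1 - x ^ k) (hW : ∀ k ∈ Ico 1 n, (1 - x ^ k) * W k = 1) :
    ∑ j ∈ Ico 1 n, (1 + x ^ j) * ∏ k ∈ (Ico 1 n).erase j, Q k
      = (1 - x) * (1 - x ^ n) * (∑ j ∈ Ico 1 n, W j * W (n - j)) * ∏ k ∈ Ico 1 n, Q k := by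
  have herase : ∀ j ∈ Ico 1 n,
      ∏ k ∈ (Ico 1 n).erase j, Q k = (1 - x) * W j * ∏ k ∈ Ico 1 n, Q k := by
    intro j hj
    rw [← mul_prod_erase _ Q hj]
    linear_combination (-(∏ k ∈ (Ico 1 n).erase j, Q k) * W j) * hQ j
      - (∏ k ∈ (Ico 1 n).erase j, Q k) * hW j hj
  calc ∑ j ∈ Ico 1 n, (1 + x ^ j) * ∏ k ∈ (Ico 1 n).erase j, Q k
      = (1 - x) * (∑ j ∈ Ico 1 n, (1 + x ^ j) * W j) * ∏ k ∈ Ico 1 n, Q k := by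
        rw [mul_sum, sum_mul]
        exact sum_congr rfl fun j hj ↦ by rw [herase j hj]; ring
    _ = _ := by rw [sum_Ico_one_add_pow_mul x n W hW]; ring

end Sums

namespace IsPrimitiveRoot

variable {K : Type*} [Field K] {ζ : K} {n : ℕ}

theorem sum_range_pow_div_pow (hζ : IsPrimitiveRoot ζ n) {i i' : ℕ} (hi : i < n) (hi' : i' < n) :
    ∑ j ∈ range n, (ζ ^ i / ζ ^ i') ^ j = if i = i' then (n : K) else 0 := by
  split_ifs with h
  · subst h
    rw [div_self (pow_ne_zero _ (hζ.ne_zero (by omega)))]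
    simp
  · have hne : ζ ^ i / ζ ^ i' ≠ 1 := fun h1 ↦
      h (hζ.pow_inj hi hi' (div_eq_one_iff_eq (pow_ne_zero _ (hζ.ne_zero (by omega))) |>.mp h1))
    rw [geom_sum_eq hne, div_pow, ← pow_mul, ← pow_mul, mul_comm i, mul_comm i', pow_mul, pow_mul,
      hζ.pow_eq_one, one_pow, one_pow, div_one, sub_self, zero_div]

theorem sum_range_mul_sum_range_inv (hζ : IsPrimitiveRoot ζ n) (f : ℕ → K) :
    ∑ j ∈ range n, (∑ i ∈ range n, f i * (ζ ^ j) ^ i) * (∑ i ∈ range n, f i * (ζ ^ j)⁻¹ ^ i)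
      = n * ∑ i ∈ range n, f i ^ 2 := by
  have hterm : ∀ j i i', f i * (ζ ^ j) ^ i * (f i' * (ζ ^ j)⁻¹ ^ i')
      = f i * f i' * (ζ ^ i / ζ ^ i') ^ j := by
    intro j i i'
    rw [div_pow, ← pow_mul, ← pow_mul, inv_pow, ← pow_mul, mul_comm j, mul_comm j, div_eq_mul_inv]
    ring
  simp_rw [sum_mul_sum, hterm]
  rw [sum_comm, mul_sum]
  refine sum_congr rfl fun i hi ↦ ?_
  rw [sum_comm]
  simp_rw [← mul_sum]
  rw [sum_congr rfl fun i' hi' ↦ by rw [hζ.sum_range_pow_div_pow (mem_range.mp hi) (mem_range.mp hi')]]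
  simp [sq, mul_comm, hi]

theorem twelve_mul_sum_inv_one_sub_pow_mul_inv_one_sub_pow (hζ : IsPrimitiveRoot ζ n) (hn : 0 < n) :
    12 * ∑ j ∈ Ico 1 n, (1 - ζ ^ j)⁻¹ * (1 - ζ ^ (n - j))⁻¹ = (n : K) ^ 2 - 1 := by
  have hinv : ∀ j ∈ Ico 1 n, ζ ^ (n - j) = (ζ ^ j)⁻¹ := fun j hj ↦ (inv_eq_of_mul_eq_one_right <| by
    rw [← pow_add, Nat.add_sub_cancel' (mem_Ico.mp hj).2.le, hζ.pow_eq_one]).symm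
  rw [sum_congr rfl fun j hj ↦ by rw [hinv j hj]]
  have : NeZero n := ⟨hn.ne'⟩
  have hn0 : (n : K) ≠ 0 := hζ.neZero'.out
  set F : K → K := fun z ↦ ∑ i ∈ range n, (i : K) * z ^ i with hFdef
  have hF : ∀ z : K, z ^ n = 1 → z ≠ 1 → F z = -n * (1 - z)⁻¹ := by
    intro z hz hz1
    rw [eq_mul_inv_iff_mul_eq₀ (sub_ne_zero.mpr (Ne.symm hz1)), mul_comm,
      one_sub_mul_sum_range_natCast_mul_pow, geom_sum_eq hz1, hz]
    simp
  have hparseval : ∑ j ∈ range n, F (ζ ^ j) * F (ζ ^ j)⁻¹ = n * ∑ i ∈ range n, (i : K) ^ 2 :=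
    hζ.sum_range_mul_sum_range_inv _
  rw [range_eq_Ico, sum_eq_sum_Ico_succ_bot hn, ← range_eq_Ico] at hparseval
  rw [sum_congr rfl fun j hj ↦ by
    have hj1 : ζ ^ j ≠ 1 :=
      hζ.pow_ne_one_of_pos_of_lt (by have := mem_Ico.mp hj; omega) (mem_Ico.mp hj).2
    have hjn : (ζ ^ j) ^ n = 1 := by rw [← pow_mul, mul_comm, pow_mul, hζ.pow_eq_one, one_pow]
    show F (ζ ^ j) * F (ζ ^ j)⁻¹ = n ^ 2 * ((1 - ζ ^ j)⁻¹ * (1 - (ζ ^ j)⁻¹)⁻¹)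
    rw [hF _ hjn hj1, hF _ (by rw [inv_pow, hjn, inv_one]) (inv_ne_one.mpr hj1)]
    ring, ← mul_sum] at hparseval
  simp only [hFdef, pow_zero, inv_one, one_pow, mul_one, zero_add] at hparseval
  have h1 := two_mul_sum_range_natCast (R := K) n
  have h2 := six_mul_sum_range_natCast_sq (R := K) n
  refine mul_left_cancel₀ (pow_ne_zero 2 hn0) ?_
  linear_combination 12 * hparseval + 2 * (n : K) * h2
    - 3 * (2 * ∑ i ∈ range n, (i : K) + n * (n - 1)) * h1

end IsPrimitiveRoot

namespace Polynomial.cyclotomic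

theorem isCoprime_one_sub_X_pow {n k : ℕ} (hk : 0 < k) (hkn : k < n) :
    IsCoprime (cyclotomic n ℚ) (1 - X ^ k) := by
  rw [← neg_sub, IsCoprime.neg_right_iff, ← prod_cyclotomic_eq_X_pow_sub_one hk]
  exact IsCoprime.prod_right fun d hd ↦ isCoprime_rat (by have := Nat.divisor_le hd; omega)

theorem exists_sq_dvd_one_sub_X_pow_mul_sub_one (n : ℕ) :
    ∃ w : ℕ → ℚ[X], ∀ k ∈ Ico 1 n, cyclotomic n ℚ ^ 2 ∣ (1 - X ^ k) * w k - 1 := by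
  have h : ∀ k ∈ Ico 1 n, IsCoprime (cyclotomic n ℚ ^ 2) (1 - X ^ k) := fun k hk ↦
    (isCoprime_one_sub_X_pow (by have := mem_Ico.mp hk; omega) (mem_Ico.mp hk).2).pow_left
  choose! u v huv using h
  exact ⟨v, fun k hk ↦ ⟨-u k, by linear_combination huv k hk⟩⟩

theorem sq_dvd_iff_sq_dvd_map_rat {n : ℕ} {f : ℤ[X]} :
    cyclotomic n ℤ ^ 2 ∣ f ↔ cyclotomic n ℚ ^ 2 ∣ f.map (Int.castRingHom ℚ) := by
  rw [← map_cyclotomic n (Int.castRingHom ℚ), ← Polynomial.map_pow,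
    map_dvd_map _ Int.cast_injective ((monic n ℤ).pow 2)]

theorem sq_dvd_one_sub_X_pow_mul {R : Type*} [CommRing R] {n : ℕ} {g : R[X]}
    (hg : cyclotomic n R ∣ g) : cyclotomic n R ^ 2 ∣ (1 - X ^ n) * g := by
  rw [sq, ← neg_sub]
  exact mul_dvd_mul (dvd_neg.mpr (dvd_X_pow_sub_one n R)) hg

theorem sq_dvd_one_sub_X_pow_mul_twelve_mul_sum_sub {n : ℕ} (hn : 0 < n) (w : ℕ → ℚ[X])
    (hw : ∀ k ∈ Ico 1 n, cyclotomic n ℚ ^ 2 ∣ (1 - X ^ k) * w k - 1) :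
    cyclotomic n ℚ ^ 2 ∣
      (1 - X ^ n) * (12 * ∑ j ∈ Ico 1 n, w j * w (n - j) - ((n : ℚ[X]) ^ 2 - 1)) := by
  set ζ : ℂ := Complex.exp (2 * Real.pi * Complex.I / n)
  have hζ : IsPrimitiveRoot ζ n := Complex.isPrimitiveRoot_exp n hn.ne'
  have hΦ : aeval ζ (cyclotomic n ℚ) = 0 := by
    rw [cyclotomic_eq_minpoly_rat hζ hn, minpoly.aeval]
  have hwζ : ∀ k ∈ Ico 1 n, aeval ζ (w k) = (1 - ζ ^ k)⁻¹ := fun k hk ↦ by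
    obtain ⟨h, hh⟩ := hw k hk
    have := congrArg (aeval ζ) hh
    simp only [map_sub, map_mul, map_pow, map_one, aeval_X, hΦ] at this
    exact (inv_eq_of_mul_eq_one_right (by linear_combination this)).symm
  refine sq_dvd_one_sub_X_pow_mul ?_
  rw [cyclotomic_eq_minpoly_rat hζ hn]
  refine minpoly.dvd ℚ ζ ?_
  rw [map_sub, map_mul, map_sum, sum_congr rfl fun j hj ↦ by
    rw [map_mul, hwζ j hj, hwζ (n - j) (by simp only [mem_Ico] at hj ⊢; omega)]]
  rw [map_ofNat, hζ.twelve_mul_sum_inv_one_sub_pow_mul_inv_one_sub_pow hn]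
  simp

end Polynomial.cyclotomic

theorem q_wolstenholme_companion (n : ℕ) (hn : 1 ≤ n) :
    (Polynomial.cyclotomic n ℤ) ^ 2 ∣
      12 * ∑ j ∈ Finset.Icc 1 (n - 1),
          ((1 : Polynomial ℤ) + Polynomial.X ^ j) * ∏ k ∈ (Finset.Icc 1 (n - 1)).erase j, qInt k
        - ((n^2 - 1 : ℤ)) • (((1 : Polynomial ℤ) - Polynomial.X)
            * ((1 : Polynomial ℤ) - Polynomial.X ^ n))
          * ∏ j ∈ Finset.Icc 1 (n - 1), qInt j := by
  set I := Ideal.span {cyclotomic n ℚ ^ 2}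
  set ψ : ℤ[X] →+* ℚ[X] ⧸ I := (Ideal.Quotient.mk I).comp (mapRingHom (Int.castRingHom ℚ))
  set x := Ideal.Quotient.mk I X
  have hψX : ψ X = x := by simp [ψ, x]
  have hQ : ∀ k, (1 - x) * ψ (qInt k) = 1 - x ^ k := by
    intro k
    simp only [qInt, map_sum, map_pow, hψX]
    exact mul_neg_geom_sum x k
  obtain ⟨w, hw⟩ := cyclotomic.exists_sq_dvd_one_sub_X_pow_mul_sub_one n
  have hW : ∀ k ∈ Ico 1 n, (1 - x ^ k) * Ideal.Quotient.mk I (w k) = 1 := fun k hk ↦ by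
    have := (Ideal.Quotient.eq_zero_iff_dvd _ _).mpr (hw k hk)
    rwa [map_sub, map_mul, map_sub, map_one, map_pow, sub_eq_zero] at this
  have hker := (Ideal.Quotient.eq_zero_iff_dvd _ _).mpr
    (cyclotomic.sq_dvd_one_sub_X_pow_mul_twelve_mul_sum_sub hn w hw)
  simp only [map_sub, map_mul, map_sum, map_one, map_pow, map_ofNat, map_natCast] at hker
  rw [cyclotomic.sq_dvd_iff_sq_dvd_map_rat, ← Ideal.Quotient.eq_zero_iff_dvd]
  change ψ _ = 0
  have hIcc : Icc 1 (n - 1) = Ico 1 n := by ext; simp only [mem_Icc, mem_Ico]; omega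
  simp only [hIcc, map_sub, map_mul, map_sum, map_prod, map_add, map_one, map_pow, map_zsmul,
    map_ofNat, hψX]
  rw [sum_Ico_one_add_pow_mul_prod_erase x n _ _ hQ hW, zsmul_eq_mul]
  push_cast
  linear_combination (1 - x) * (∏ k ∈ Ico 1 n, ψ (qInt k)) * hker
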